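/- arXiv:1907.06949 — 4 statements merged into one kernel-verified Lean document; each statement's English description precedes it below -/
import Mathlib

section
/- Fix γ > 0 and define h : ℝ → ℝ by h(λ) = √γ·λ/(λ² + γ). Let B > 0, κ ≥ 1, and 0 < ε ≤ 1. Suppose λ and λ̄ are real numbers with B/κ ≤ |λ| and |λ̄ − λ| ≤ ε·B/(4κ). Then |h(λ̄) − h(λ)| ≤ (ε/3)·|h(λ)|. -/
/-- For `h(λ) = √γ λ / (λ² + γ)`: if `B/κ ≤ |λ|` and `λ̄` estimates `λ` with
precision `ε B / (4 κ)`, then `|h(λ̄) − h(λ)| ≤ (ε/3) |h(λ)|`. -/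
theorem h_estimate_error
    (γ B κ ε lam lamBar : ℝ) (hγ : 0 < γ) (hB : 0 < B) (hκ : 1 ≤ κ)
    (hε : 0 < ε) (hε1 : ε ≤ 1) (hlam : B / κ ≤ |lam|)
    (hest : |lamBar - lam| ≤ ε * B / (4 * κ)) :
    let h : ℝ → ℝ := fun x => Real.sqrt γ * x / (x ^ 2 + γ)
    |h lamBar - h lam| ≤ (ε / 3) * |h lam| := by
  intro h
  have hκ0 : 0 < κ := lt_of_lt_of_le one_pos hκ
  have hlam0 : 0 < |lam| := lt_of_lt_of_le (div_pos hB hκ0) hlam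
  have hd : |lamBar - lam| ≤ ε * |lam| / 4 := by
    calc |lamBar - lam| ≤ ε * B / (4 * κ) := hest
      _ = (ε / 4) * (B / κ) := by ring
      _ ≤ (ε / 4) * |lam| := by
          apply mul_le_mul_of_nonneg_left hlam (by positivity)
      _ = ε * |lam| / 4 := by ring
  have hd4 : |lamBar - lam| ≤ |lam| / 4 := by nlinarith
  have hbar : 3 / 4 * |lam| ≤ |lamBar| := by
    have := abs_sub_abs_le_abs_sub lam lamBar
    rw [abs_sub_comm] at this
    linarith
  have hs : 0 < Real.sqrt γ := Real.sqrt_pos.mpr hγ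
  have hsq : Real.sqrt γ ^ 2 = γ := Real.sq_sqrt hγ.le
  have hD1 : 0 < lamBar ^ 2 + γ := by positivity
  have hD2 : 0 < lam ^ 2 + γ := by positivity
  -- key inequality
  have key : |lamBar - lam| * |γ - lam * lamBar| ≤ (ε / 3) * |lam| * (lamBar ^ 2 + γ) := by
    have h1 : |γ - lam * lamBar| ≤ γ + |lam| * |lamBar| := by
      calc |γ - lam * lamBar| ≤ |γ| + |lam * lamBar| := abs_sub _ _
        _ = γ + |lam| * |lamBar| := by rw [abs_of_pos hγ, abs_mul]
    have hbar2 : |lamBar| ^ 2 = lamBar ^ 2 := sq_abs _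
    have h2 : 3 * |lam| * |lamBar| ≤ 4 * lamBar ^ 2 := by
      nlinarith [mul_le_mul_of_nonneg_right (by linarith : |lam| ≤ 4 / 3 * |lamBar|)
        (abs_nonneg lamBar)]
    have h3 : 0 ≤ ε * |lam| * ((4 * lamBar ^ 2 + γ) - 3 * |lam| * |lamBar|) :=
      mul_nonneg (mul_nonneg hε.le (abs_nonneg lam)) (by linarith)
    nlinarith [mul_le_mul hd h1 (abs_nonneg _) (by positivity : (0:ℝ) ≤ ε * |lam| / 4)]
  have heq : h lamBar - h lam =
      Real.sqrt γ * (lamBar - lam) * (γ - lam * lamBar) / ((lamBar ^ 2 + γ) * (lam ^ 2 + γ)) := by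
    show Real.sqrt γ * lamBar / (lamBar ^ 2 + γ) - Real.sqrt γ * lam / (lam ^ 2 + γ) = _
    field_simp
    ring
  rw [heq]
  show _ ≤ ε / 3 * |Real.sqrt γ * lam / (lam ^ 2 + γ)|
  rw [abs_div, abs_mul, abs_mul, abs_of_pos hs, abs_of_pos (mul_pos hD1 hD2),
    abs_div, abs_mul, abs_of_pos hs, abs_of_pos hD2]
  rw [div_le_iff₀ (mul_pos hD1 hD2)]
  have : ε / 3 * (Real.sqrt γ * |lam| / (lam ^ 2 + γ)) * ((lamBar ^ 2 + γ) * (lam ^ 2 + γ))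
      = Real.sqrt γ * ((ε / 3) * |lam| * (lamBar ^ 2 + γ)) := by
    field_simp
  rw [this]
  have := mul_le_mul_of_nonneg_left key hs.le
  nlinarith [abs_nonneg (lamBar - lam), abs_nonneg (γ - lam * lamBar)]
end

section
/- Fix γ > 0 and define h : ℝ → ℝ by h(λ) = √γ·λ/(λ² + γ). Let B > 0, κ ≥ 1, and 0 < ε ≤ 1. Suppose λ and λ̄ are real numbers with B/κ ≤ |λ| and |λ̄ − λ| ≤ ε·B/(4κ). Then the ratio h(λ̄)/h(λ) is well-defined (h(λ) ≠ 0) and satisfies 1 − ε/3 ≤ h(λ̄)/h(λ) ≤ 1 + ε/3. -/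
/-!
Writing `r = λ̄ / λ`, the ratio `h(λ̄) / h(λ) = λ̄ (λ² + γ) / (λ (λ̄² + γ))` is the average of
`1 / r` and `r` with weights `λ̄²` and `γ`, so it lies between `r` and `1 / r`. The precision
assumption gives `|r - 1| ≤ ε / 4`, and for `ε ≤ 1` both `r` and `1 / r` are within `ε / 3` of `1`.
-/

open Set

lemma sqrt_mul_div_sq_add_div_mem_uIcc {γ x : ℝ} (hγ : 0 < γ) (hx : x ≠ 0) (y : ℝ) :
    (√γ * y / (y ^ 2 + γ)) / (√γ * x / (x ^ 2 + γ)) ∈ uIcc (x / y) (y / x) := by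
  rw [← segment_eq_uIcc, mem_segment_iff_div]
  refine ⟨y ^ 2, γ, sq_nonneg y, hγ.le, by positivity, ?_⟩
  have hsqrt : √γ ≠ 0 := (Real.sqrt_pos.2 hγ).ne'
  have hxy : y ^ 2 * (x / y) = x * y := by
    rcases eq_or_ne y 0 with rfl | hy
    · simp
    · field_simp
  simp only [smul_eq_mul]
  rw [div_mul_eq_mul_div, hxy]
  field_simp

lemma uIcc_inv_subset_Icc {r s : ℝ} (hr : |r - 1| ≤ s / 4) (hs : s ≤ 1) :
    uIcc r⁻¹ r ⊆ Icc (1 - s / 3) (1 + s / 3) := by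
  obtain ⟨hr₁, hr₂⟩ := abs_le.1 hr
  have hs₀ : 0 ≤ s := by linarith [abs_nonneg (r - 1)]
  have hr₀ : 0 < r := by linarith
  refine uIcc_subset_Icc ⟨?_, ?_⟩ ⟨by linarith, by linarith⟩
  · rw [le_inv_comm₀ (by linarith) hr₀, inv_eq_one_div, le_div_iff₀ (by linarith)]
    nlinarith
  · rw [inv_le_comm₀ hr₀ (by linarith), inv_eq_one_div, div_le_iff₀ (by linarith)]
    nlinarith

lemma abs_div_sub_one_le {x y c s : ℝ} (hc : 0 < c) (hx : c ≤ |x|) (hxy : |y - x| ≤ s * c) :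
    |y / x - 1| ≤ s := by
  have hx₀ : x ≠ 0 := abs_pos.1 (hc.trans_le hx)
  calc |y / x - 1| = |y - x| / |x| := by rw [div_sub_one hx₀, abs_div]
    _ ≤ s * c / |x| := by gcongr
    _ ≤ s * c / c := div_le_div_of_nonneg_left ((abs_nonneg _).trans hxy) hc hx
    _ = s := mul_div_cancel_right₀ s hc.ne'

theorem h_ratio_bounds_general
    (γ B κ ε lam lamBar : ℝ) (hγ : 0 < γ) (hB : 0 < B) (hκ : 1 ≤ κ)
    (hε1 : ε ≤ 1) (hlam : B / κ ≤ |lam|)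
    (hest : |lamBar - lam| ≤ ε * B / (4 * κ)) :
    let h : ℝ → ℝ := fun x => Real.sqrt γ * x / (x ^ 2 + γ)
    h lam ≠ 0 ∧ 1 - ε / 3 ≤ h lamBar / h lam ∧ h lamBar / h lam ≤ 1 + ε / 3 := by
  intro h
  have hBκ : 0 < B / κ := div_pos hB (by linarith)
  have hlam₀ : lam ≠ 0 := abs_pos.1 (hBκ.trans_le hlam)
  have hr : |lamBar / lam - 1| ≤ ε / 4 :=
    abs_div_sub_one_le hBκ hlam (hest.trans_eq (by ring))
  have hmem := sqrt_mul_div_sq_add_div_mem_uIcc hγ hlam₀ lamBar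
  rw [← inv_div] at hmem
  have hbounds := uIcc_inv_subset_Icc hr hε1 hmem
  have hh : h lam ≠ 0 :=
    div_ne_zero (mul_ne_zero (Real.sqrt_pos.2 hγ).ne' hlam₀) (by positivity)
  exact ⟨hh, hbounds.1, hbounds.2⟩

/-- For `h(λ) = √γ λ / (λ² + γ)`: if `B/κ ≤ |λ|` and `λ̄` estimates `λ` with
precision `ε B / (4 κ)`, then `h(λ) ≠ 0` and `1 − ε/3 ≤ h(λ̄)/h(λ) ≤ 1 + ε/3`. -/
theorem h_ratio_bounds
    (γ B κ ε lam lamBar : ℝ) (hγ : 0 < γ) (hB : 0 < B) (hκ : 1 ≤ κ)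
    (hε : 0 < ε) (hε1 : ε ≤ 1) (hlam : B / κ ≤ |lam|)
    (hest : |lamBar - lam| ≤ ε * B / (4 * κ)) :
    let h : ℝ → ℝ := fun x => Real.sqrt γ * x / (x ^ 2 + γ)
    h lam ≠ 0 ∧ 1 - ε / 3 ≤ h lamBar / h lam ∧ h lamBar / h lam ≤ 1 + ε / 3 :=
  h_ratio_bounds_general γ B κ ε lam lamBar hγ hB hκ hε1 hlam hest
end

section
/- Let V be a complex inner product space, let n be a natural number, let 0 ≤ t < 1, and let a ∈ Vⁿ be obtained as a = Σᵢ αᵢ vᵢ and b = Σᵢ cᵢ αᵢ vᵢ, where (vᵢ) is an orthonormal family in V, αᵢ ∈ ℂ are not all zero, and cᵢ are real numbers with 1 − t ≤ cᵢ ≤ 1 + t for all i. Then a ≠ 0, b ≠ 0, and the normalized vectors satisfy ‖ b/‖b‖ − a/‖a‖ ‖ ≤ 2t/(1 − t). -/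
/-!
By Parseval, scaling every coefficient by a factor within `t` of `1` moves the vector by at most
`t ‖a‖`; normalization at most doubles a relative error, `‖b/‖b‖ − a/‖a‖‖ ≤ 2 ‖b − a‖ / ‖a‖`,
which gives the bound `2t ≤ 2t/(1 − t)`.
-/

open Finset

section Orthonormal

variable {𝕜 E ι : Type*} [RCLike 𝕜] [NormedAddCommGroup E] [InnerProductSpace 𝕜 E] [Fintype ι]
  {v : ι → E}

theorem Orthonormal.norm_sum_smul_sq (hv : Orthonormal 𝕜 v) (l : ι → 𝕜) :
    ‖∑ i, l i • v i‖ ^ 2 = ∑ i, ‖l i‖ ^ 2 := by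
  simpa using hv.orthogonalFamily.norm_sum l univ

theorem Orthonormal.norm_sum_smul_le_of_norm_le (hv : Orthonormal 𝕜 v) {α β : ι → 𝕜} {t : ℝ}
    (ht : 0 ≤ t) (hβ : ∀ i, ‖β i‖ ≤ t * ‖α i‖) :
    ‖∑ i, β i • v i‖ ≤ t * ‖∑ i, α i • v i‖ := by
  refine pow_le_pow_iff_left₀ (norm_nonneg _) (by positivity) two_ne_zero |>.mp ?_
  rw [mul_pow, hv.norm_sum_smul_sq, hv.norm_sum_smul_sq, mul_sum]
  gcongr with i
  rw [← mul_pow]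
  gcongr
  exact hβ i

theorem Orthonormal.sum_smul_ne_zero (hv : Orthonormal 𝕜 v) {α : ι → 𝕜} (hα : α ≠ 0) :
    ∑ i, α i • v i ≠ 0 :=
  fun h => hα <| funext <| Fintype.linearIndependent_iff.mp hv.linearIndependent α h

end Orthonormal

theorem abs_inv_norm_sub_inv_norm_mul_norm_le {E : Type*} [SeminormedAddCommGroup E] {a : E}
    (ha : ‖a‖ ≠ 0) (b : E) : |‖b‖⁻¹ - ‖a‖⁻¹| * ‖b‖ ≤ ‖b - a‖ / ‖a‖ := by
  rcases eq_or_ne ‖b‖ 0 with hb | hb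
  · rw [hb, mul_zero]; positivity
  rw [inv_sub_inv hb ha, abs_div, abs_mul, abs_norm, abs_norm, div_mul_eq_mul_div,
    mul_comm ‖b‖, mul_div_mul_right _ _ hb, norm_sub_rev]
  gcongr
  exact abs_norm_sub_norm_le a b

theorem norm_inv_norm_smul_sub_inv_norm_smul_le {E : Type*} [SeminormedAddCommGroup E]
    [NormedSpace ℝ E] {a : E} (ha : ‖a‖ ≠ 0) (b : E) :
    ‖‖b‖⁻¹ • b - ‖a‖⁻¹ • a‖ ≤ 2 * ‖b - a‖ / ‖a‖ := by
  calc ‖‖b‖⁻¹ • b - ‖a‖⁻¹ • a‖ = ‖(‖b‖⁻¹ - ‖a‖⁻¹) • b + ‖a‖⁻¹ • (b - a)‖ := by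
        congr 1; module
    _ ≤ |‖b‖⁻¹ - ‖a‖⁻¹| * ‖b‖ + ‖a‖⁻¹ * ‖b - a‖ := by
        grw [norm_add_le, norm_smul, norm_smul, Real.norm_eq_abs,
          Real.norm_of_nonneg (by positivity)]
    _ ≤ ‖b - a‖ / ‖a‖ + ‖b - a‖ / ‖a‖ := by
        grw [abs_inv_norm_sub_inv_norm_mul_norm_le ha, inv_mul_eq_div]
    _ = 2 * ‖b - a‖ / ‖a‖ := by ring

/-- If each coefficient of a vector (expanded in an orthonormal family) is perturbed
multiplicatively by a real factor in `[1 − t, 1 + t]` with `0 ≤ t < 1`, then the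
corresponding unit vectors differ in norm by at most `2t/(1 − t)`. -/
theorem normalized_perturbation_bound
    {V : Type*} [NormedAddCommGroup V] [InnerProductSpace ℂ V]
    (n : ℕ) (t : ℝ) (ht : 0 ≤ t) (ht1 : t < 1)
    (v : Fin n → V) (hv : Orthonormal ℂ v)
    (α : Fin n → ℂ) (hα : α ≠ 0)
    (c : Fin n → ℝ) (hc : ∀ i, 1 - t ≤ c i ∧ c i ≤ 1 + t) :
    let a : V := ∑ i, α i • v i
    let b : V := ∑ i, ((c i : ℂ) * α i) • v i
    a ≠ 0 ∧ b ≠ 0 ∧ ‖‖b‖⁻¹ • b - ‖a‖⁻¹ • a‖ ≤ 2 * t / (1 - t) := by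
  intro a b
  have ha : 0 < ‖a‖ := norm_pos_iff.mpr (hv.sum_smul_ne_zero hα)
  have hba : ‖b - a‖ ≤ t * ‖a‖ := by
    simp only [a, b, ← sum_sub_distrib, ← sub_smul]
    refine hv.norm_sum_smul_le_of_norm_le ht fun i => ?_
    rw [← sub_one_mul, norm_mul, ← Complex.ofReal_one, ← Complex.ofReal_sub, Complex.norm_real,
      Real.norm_eq_abs]
    gcongr
    exact abs_sub_le_iff.mpr ⟨by linarith [hc i], by linarith [hc i]⟩
  have hb : 0 < ‖b‖ := by
    nlinarith [norm_sub_norm_le a b, norm_sub_rev a b]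
  refine ⟨norm_pos_iff.mp ha, norm_pos_iff.mp hb, ?_⟩
  calc ‖‖b‖⁻¹ • b - ‖a‖⁻¹ • a‖ ≤ 2 * ‖b - a‖ / ‖a‖ :=
        norm_inv_norm_smul_sub_inv_norm_smul_le ha.ne' b
    _ ≤ 2 * t := by rw [mul_div_assoc]; gcongr; exact (div_le_iff₀ ha).mpr hba
    _ ≤ 2 * t / (1 - t) := le_div_self (by positivity) (by linarith) (by linarith)
end

section
/- Let V be a complex inner product space and (vᵢ)_{i=1}^{N} an orthonormal family in V. Fix γ > 0 and define h : ℝ → ℝ by h(λ) = √γ·λ/(λ² + γ). Let B > 0, κ ≥ 1, 0 < ε ≤ 1, and let λ₁, …, λ_N and λ̄₁, …, λ̄_N be real numbers with B/κ ≤ |λᵢ| ≤ B and |λ̄ᵢ − λᵢ| ≤ ε·B/(4κ) for every i. Let β₁, …, β_N ∈ ℂ be not all zero, and set w* = u*/‖u*‖ and w = u/‖u‖ where u* = Σᵢ βᵢ·h(λᵢ)·vᵢ and u = Σᵢ βᵢ·h(λ̄ᵢ)·vᵢ. Then u* ≠ 0, u ≠ 0, and ‖w − w*‖ ≤ ε.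 -/
private lemma aux_normalize {W : Type*} [NormedAddCommGroup W] [NormedSpace ℝ W]
    (a b : W) (ha : a ≠ 0) (hb : b ≠ 0) :
    ‖‖a‖⁻¹ • a - ‖b‖⁻¹ • b‖ ≤ 2 * ‖a - b‖ / ‖b‖ := by
  have ha' : 0 < ‖a‖ := norm_pos_iff.mpr ha
  have hb' : 0 < ‖b‖ := norm_pos_iff.mpr hb
  have key : ‖a‖⁻¹ • a - ‖b‖⁻¹ • b = ‖b‖⁻¹ • (a - b) + (‖a‖⁻¹ - ‖b‖⁻¹) • a := by
    rw [smul_sub, sub_smul]; abel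
  have h3 : |‖b‖ - ‖a‖| ≤ ‖a - b‖ := by
    rw [abs_sub_comm]; exact abs_norm_sub_norm_le a b
  have h2 : ‖(‖a‖⁻¹ - ‖b‖⁻¹) • a‖ ≤ ‖a - b‖ / ‖b‖ := by
    rw [norm_smul, Real.norm_eq_abs]
    have e : ‖a‖⁻¹ - ‖b‖⁻¹ = (‖b‖ - ‖a‖) / (‖a‖ * ‖b‖) := by field_simp
    rw [e, abs_div, abs_of_pos (mul_pos ha' hb')]
    calc |‖b‖ - ‖a‖| / (‖a‖ * ‖b‖) * ‖a‖ = |‖b‖ - ‖a‖| / ‖b‖ := by field_simp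
      _ ≤ ‖a - b‖ / ‖b‖ := by gcongr
  have h1 : ‖(‖b‖⁻¹ : ℝ) • (a - b)‖ = ‖a - b‖ / ‖b‖ := by
    rw [norm_smul, norm_inv, norm_norm, inv_mul_eq_div]
  calc ‖‖a‖⁻¹ • a - ‖b‖⁻¹ • b‖ = ‖‖b‖⁻¹ • (a - b) + (‖a‖⁻¹ - ‖b‖⁻¹) • a‖ := by rw [key]
    _ ≤ ‖(‖b‖⁻¹ : ℝ) • (a - b)‖ + ‖(‖a‖⁻¹ - ‖b‖⁻¹) • a‖ := norm_add_le _ _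
    _ ≤ ‖a - b‖ / ‖b‖ + ‖a - b‖ / ‖b‖ := by rw [h1]; gcongr
    _ = 2 * ‖a - b‖ / ‖b‖ := by ring

private lemma aux_pointwise (γ B κ ε l lb : ℝ) (hγ : 0 < γ) (hB : 0 < B) (hκ : 1 ≤ κ)
    (hε : 0 < ε) (hε1 : ε ≤ 1) (hl : B / κ ≤ |l|) (hest : |lb - l| ≤ ε * B / (4 * κ)) :
    |Real.sqrt γ * lb / (lb ^ 2 + γ) - Real.sqrt γ * l / (l ^ 2 + γ)| ≤
      ε / 3 * (Real.sqrt γ * |l| / (l ^ 2 + γ)) := by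
  have hκ0 : 0 < κ := lt_of_lt_of_le one_pos hκ
  have hl0 : 0 < |l| := lt_of_lt_of_le (div_pos hB hκ0) hl
  have hd1 : 0 < l ^ 2 + γ := by positivity
  have hd2 : 0 < lb ^ 2 + γ := by positivity
  have hsγ : 0 ≤ Real.sqrt γ := Real.sqrt_nonneg γ
  have h1 : |lb - l| ≤ ε / 4 * |l| := by
    calc |lb - l| ≤ ε * B / (4 * κ) := hest
      _ = ε / 4 * (B / κ) := by ring
      _ ≤ ε / 4 * |l| := by gcongr
  have hll : |lb - l| ≤ |l| / 4 := by nlinarith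
  have hlb : 3 / 4 * |l| ≤ |lb| := by
    have := abs_sub_abs_le_abs_sub l lb
    rw [abs_sub_comm] at this
    linarith
  have hub : l * lb ≤ 4 / 3 * lb ^ 2 := by
    calc l * lb ≤ |l * lb| := le_abs_self _
      _ = |l| * |lb| := abs_mul l lb
      _ ≤ 4 / 3 * |lb| * |lb| := by nlinarith [abs_nonneg lb]
      _ = 4 / 3 * lb ^ 2 := by rw [mul_assoc, ← sq_abs]; ring
  have hsign : 0 ≤ l * lb := by
    have e1 : l * lb = l ^ 2 + l * (lb - l) := by ring
    have e2 : -(|l| * |lb - l|) ≤ l * (lb - l) := by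
      have := neg_abs_le (l * (lb - l))
      rw [abs_mul] at this; linarith
    nlinarith [sq_abs l, abs_nonneg l]
  have h2 : |γ - l * lb| ≤ 4 / 3 * (γ + lb ^ 2) := by
    rw [abs_le]
    constructor <;> nlinarith [sq_nonneg lb]
  have hid : Real.sqrt γ * lb / (lb ^ 2 + γ) - Real.sqrt γ * l / (l ^ 2 + γ) =
      Real.sqrt γ * ((lb - l) * (γ - l * lb)) / ((lb ^ 2 + γ) * (l ^ 2 + γ)) := by
    field_simp
    ring
  rw [hid, abs_div, abs_mul, abs_mul, abs_of_pos (mul_pos hd2 hd1), abs_of_nonneg hsγ]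
  have hkey : |lb - l| * |γ - l * lb| ≤ ε / 3 * (|l| * (lb ^ 2 + γ)) := by
    calc |lb - l| * |γ - l * lb| ≤ (ε / 4 * |l|) * (4 / 3 * (γ + lb ^ 2)) := by
          exact mul_le_mul h1 h2 (abs_nonneg _) (by positivity)
      _ = ε / 3 * (|l| * (lb ^ 2 + γ)) := by ring
  calc Real.sqrt γ * (|lb - l| * |γ - l * lb|) / ((lb ^ 2 + γ) * (l ^ 2 + γ))
      ≤ Real.sqrt γ * (ε / 3 * (|l| * (lb ^ 2 + γ))) / ((lb ^ 2 + γ) * (l ^ 2 + γ)) := by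
        gcongr
    _ = ε / 3 * (Real.sqrt γ * |l| / (l ^ 2 + γ)) := by field_simp

private lemma aux_norm_sq {V : Type*} [NormedAddCommGroup V] [InnerProductSpace ℂ V]
    {N : ℕ} {v : Fin N → V} (hv : Orthonormal ℂ v) (c : Fin N → ℂ) :
    ‖∑ i, c i • v i‖ ^ 2 = ∑ i, ‖c i‖ ^ 2 := by
  have h1 := inner_self_eq_norm_sq (𝕜 := ℂ) (∑ i, c i • v i)
  rw [hv.inner_sum c c Finset.univ] at h1
  rw [← h1, map_sum]
  congr 1
  ext i
  rw [RCLike.conj_mul, ← RCLike.ofReal_pow, RCLike.ofReal_re]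

/-- Correctness core of the quantum data fitting algorithm: if each eigenvalue
`λᵢ ∈ [B/κ, B]` (in absolute value) is estimated by `λ̄ᵢ` with precision
`ε B/(4κ)`, then the normalized states built from the coefficients
`βᵢ h(λᵢ)` and `βᵢ h(λ̄ᵢ)` (with `h(λ) = √γ λ/(λ² + γ)`) are within `ε`
of each other in norm. -/
theorem quantum_data_fitting_correctness
    {V : Type*} [NormedAddCommGroup V] [InnerProductSpace ℂ V]
    (N : ℕ) (v : Fin N → V) (hv : Orthonormal ℂ v)
    (γ B κ ε : ℝ) (hγ : 0 < γ) (hB : 0 < B) (hκ : 1 ≤ κ)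
    (hε : 0 < ε) (hε1 : ε ≤ 1)
    (lam lamBar : Fin N → ℝ)
    (hlam : ∀ i, B / κ ≤ |lam i| ∧ |lam i| ≤ B)
    (hest : ∀ i, |lamBar i - lam i| ≤ ε * B / (4 * κ))
    (β : Fin N → ℂ) (hβ : β ≠ 0) :
    let h : ℝ → ℝ := fun x => Real.sqrt γ * x / (x ^ 2 + γ)
    let ustar : V := ∑ i, (β i * ((h (lam i) : ℝ) : ℂ)) • v i
    let u : V := ∑ i, (β i * ((h (lamBar i) : ℝ) : ℂ)) • v i
    ustar ≠ 0 ∧ u ≠ 0 ∧ ‖‖u‖⁻¹ • u - ‖ustar‖⁻¹ • ustar‖ ≤ ε := by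
  intro hfun ustar u
  have hκ0 : 0 < κ := lt_of_lt_of_le one_pos hκ
  set c : Fin N → ℂ := fun i => β i * ((hfun (lam i) : ℝ) : ℂ) with hc
  set cb : Fin N → ℂ := fun i => β i * ((hfun (lamBar i) : ℝ) : ℂ) with hcb
  have hns : ‖ustar‖ ^ 2 = ∑ i, ‖c i‖ ^ 2 := aux_norm_sq hv c
  have hnd : ‖u - ustar‖ ^ 2 = ∑ i, ‖cb i - c i‖ ^ 2 := by
    have e : u - ustar = ∑ i, (cb i - c i) • v i := by
      show (∑ i, cb i • v i) - ∑ i, c i • v i = _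
      rw [← Finset.sum_sub_distrib]
      exact Finset.sum_congr rfl fun i _ => (sub_smul _ _ _).symm
    rw [e]; exact aux_norm_sq hv _
  have habs : ∀ l : ℝ, |hfun l| = Real.sqrt γ * |l| / (l ^ 2 + γ) := by
    intro l
    show |Real.sqrt γ * l / (l ^ 2 + γ)| = _
    rw [abs_div, abs_mul, abs_of_nonneg (Real.sqrt_nonneg γ),
      abs_of_pos (show (0:ℝ) < l ^ 2 + γ by positivity)]
  have hpt : ∀ i, ‖cb i - c i‖ ≤ ε / 3 * ‖c i‖ := by
    intro i
    have e : cb i - c i = β i * (((hfun (lamBar i) - hfun (lam i) : ℝ)) : ℂ) := by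
      rw [hc, hcb]; push_cast; ring
    have e2 : ‖c i‖ = ‖β i‖ * (Real.sqrt γ * |lam i| / (lam i ^ 2 + γ)) := by
      rw [hc, norm_mul, Complex.norm_real, Real.norm_eq_abs, habs]
    rw [e, norm_mul, Complex.norm_real, Real.norm_eq_abs, e2]
    have key := aux_pointwise γ B κ ε (lam i) (lamBar i) hγ hB hκ hε hε1 (hlam i).1 (hest i)
    calc ‖β i‖ * |hfun (lamBar i) - hfun (lam i)|
        ≤ ‖β i‖ * (ε / 3 * (Real.sqrt γ * |lam i| / (lam i ^ 2 + γ))) := by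
          exact mul_le_mul_of_nonneg_left key (norm_nonneg _)
      _ = ε / 3 * (‖β i‖ * (Real.sqrt γ * |lam i| / (lam i ^ 2 + γ))) := by ring
  obtain ⟨i0, hi0⟩ := Function.ne_iff.mp hβ
  have hc0 : c i0 ≠ 0 := by
    apply mul_ne_zero hi0
    simp only [ne_eq, Complex.ofReal_eq_zero]
    have hli : lam i0 ≠ 0 := by
      have h1 : 0 < |lam i0| := lt_of_lt_of_le (div_pos hB hκ0) (hlam i0).1
      exact abs_pos.mp h1
    show Real.sqrt γ * lam i0 / (lam i0 ^ 2 + γ) ≠ 0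
    exact div_ne_zero (mul_ne_zero (ne_of_gt (Real.sqrt_pos.mpr hγ)) hli) (by positivity)
  have hsq_pos : 0 < ‖ustar‖ ^ 2 := by
    rw [hns]
    have hle : ‖c i0‖ ^ 2 ≤ ∑ i, ‖c i‖ ^ 2 :=
      Finset.single_le_sum (f := fun i => ‖c i‖ ^ 2) (fun i _ => sq_nonneg _) (Finset.mem_univ i0)
    have hpos : 0 < ‖c i0‖ ^ 2 := by
      have := norm_pos_iff.mpr hc0
      positivity
    linarith
  have hustar_ne : ustar ≠ 0 := by
    intro h0
    rw [h0, norm_zero] at hsq_pos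
    simp at hsq_pos
  have hustar_pos : 0 < ‖ustar‖ := norm_pos_iff.mpr hustar_ne
  have hsq : ‖u - ustar‖ ^ 2 ≤ (ε / 3 * ‖ustar‖) ^ 2 := by
    rw [hnd, mul_pow, hns, Finset.mul_sum]
    refine Finset.sum_le_sum fun i _ => ?_
    have := hpt i
    nlinarith [norm_nonneg (cb i - c i), norm_nonneg (c i)]
  have hdiff : ‖u - ustar‖ ≤ ε / 3 * ‖ustar‖ :=
    (pow_le_pow_iff_left₀ (norm_nonneg _) (by positivity) two_ne_zero).mp hsq
  have hu_lb : (2 / 3 : ℝ) * ‖ustar‖ ≤ ‖u‖ := by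
    have h4 := norm_sub_norm_le ustar u
    rw [norm_sub_rev] at h4
    nlinarith
  have hu_ne : u ≠ 0 := by
    refine norm_pos_iff.mp ?_
    linarith
  refine ⟨hustar_ne, hu_ne, ?_⟩
  calc ‖‖u‖⁻¹ • u - ‖ustar‖⁻¹ • ustar‖
      ≤ 2 * ‖u - ustar‖ / ‖ustar‖ := aux_normalize u ustar hu_ne hustar_ne
    _ ≤ 2 * (ε / 3 * ‖ustar‖) / ‖ustar‖ := by gcongr
    _ = 2 * ε / 3 := by field_simp
    _ ≤ ε := by linarith
end
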